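/- arXiv:1107.2365 — 2 statements merged into one kernel-verified Lean document; each statement's English description precedes it below -/
import Mathlib

section
/- For all x ≥ 0, g(e^x − 1) ≤ x + 1, where g(y) = (y+1)log(y+1) − y log y. Equivalently, 1 + g⁻¹(s) ≥ e^{s−1} for all s ≥ 1. -/
noncomputable def g (y : ℝ) : ℝ := (y + 1) * Real.log (y + 1) - y * Real.log y

theorem g_exp_le (x : ℝ) (hx : 0 ≤ x) : g (Real.exp x - 1) ≤ x + 1 := by
  rcases eq_or_lt_of_le hx with h0 | hx'
  · simp [g, ← h0]
  · set u : ℝ := 1 - Real.exp (-x) with hu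
    have hu0 : 0 < u := by
      have : Real.exp (-x) < 1 := Real.exp_lt_one_iff.mpr (by linarith)
      simp [hu]; linarith
    have hu1 : u < 1 := by
      have : 0 < Real.exp (-x) := Real.exp_pos _
      simp [hu]; linarith
    have hlog : 1 - 1/u ≤ Real.log u := by
      have h := Real.add_one_le_exp (-Real.log u)
      rw [Real.exp_neg, Real.exp_log hu0] at h
      have : -Real.log u + 1 ≤ 1/u := by rw [one_div]; linarith
      nlinarith
    have hkey : u - 1 ≤ u * Real.log u := by
      have h := mul_le_mul_of_nonneg_left hlog hu0.le
      have he : u * (1 - 1/u) = u - 1 := by field_simp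
      rw [he] at h; exact h
    have hprod : Real.exp x * u = Real.exp x - 1 := by
      have := Real.exp_neg x
      have h2 : Real.exp x * Real.exp (-x) = 1 := by
        rw [this]; field_simp
      simp [hu, mul_sub]; linarith
    have hepos : 0 < Real.exp x := Real.exp_pos x
    have hypos : 0 < Real.exp x - 1 := by rw [← hprod]; positivity
    have hlogy : Real.log (Real.exp x - 1) = x + Real.log u := by
      rw [← hprod, Real.log_mul (ne_of_gt hepos) (ne_of_gt hu0), Real.log_exp]
    have hexpu : Real.exp x * (1 - u) = 1 := by
      have := Real.exp_neg x
      simp [hu, mul_sub]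
      rw [this]; field_simp
    have hkey2 : -((Real.exp x - 1) * Real.log u) ≤ 1 := by
      rw [← hprod]
      nlinarith
    have : g (Real.exp x - 1) = Real.exp x * x - (Real.exp x - 1) * (x + Real.log u) := by
      unfold g
      rw [sub_add_cancel, Real.log_exp, hlogy]
    rw [this]
    nlinarith
end

section
/- For all x ≥ 0, g(e^x − 1) ≥ x + 1 − e^{−x}, where g(y) = (y+1)log(y+1) − y log y. -/
theorem g_exp_ge (x : ℝ) (hx : 0 ≤ x) : x + 1 - Real.exp (-x) ≤ g (Real.exp x - 1) := by
  rcases eq_or_lt_of_le hx with h0 | hpos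
  · subst h0; simp [g]
  · set E := Real.exp x with hE
    set t := 1 - Real.exp (-x) with ht
    have hEpos : 0 < E := Real.exp_pos x
    have ht0 : 0 < t := by
      have : Real.exp (-x) < 1 := Real.exp_lt_one_iff.mpr (by linarith)
      simp [ht]; linarith
    have hEinv : E * Real.exp (-x) = 1 := by
      rw [hE, ← Real.exp_add]; simp
    have hEt : E * t = E - 1 := by
      rw [ht]; ring_nf; linarith [hEinv]
    have hE1 : 0 < E - 1 := by rw [← hEt]; positivity
    have hlogE1 : Real.log (E - 1) = x + Real.log t := by
      rw [← hEt, Real.log_mul (ne_of_gt hEpos) (ne_of_gt ht0), Real.log_exp]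
    have hgval : g (E - 1) = x - E * t * Real.log t := by
      have : E - 1 + 1 = E := by ring
      rw [g, this, hlogE1, hE, Real.log_exp, ← hE, ← hEt]; ring_nf
      linear_combination x * hEinv
    rw [hgval]
    have hlt : Real.log t ≤ t - 1 := Real.log_le_sub_one_of_pos ht0
    have key : E * Real.log t ≤ -1 := by
      calc E * Real.log t ≤ E * (t - 1) := by nlinarith
        _ = -1 := by nlinarith [hEt]
    have : -(E * t * Real.log t) ≥ t := by nlinarith
    have htval : t = 1 - Real.exp (-x) := ht
    linarith
end
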